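/- arXiv:2202.09080 — 2 statements merged into one kernel-verified Lean document; each statement's English description precedes it below -/
import Mathlib

section
/- Let H = [[a,b],[c,d]] be a 2×2 unitary matrix with abcd ≠ 0 and κ ≥ 1. Then the κ×κ circulant matrix Circ(H) defined by first column entries w_0 = d + (bc/(1−a^κ))a^{κ−1} and w_ℓ = (bc/(1−a^κ))a^{ℓ−1} (ℓ = 1,…,κ−1) is unitary. -/
/-!
Let `P` be the cyclic shift on `ℂ^κ` and `M = Circ(H)`. The weights are chosen so that
`(1 - a P) M = d (1 - a P) + b c P`, i.e. `M = d + b c P (1 - a P)⁻¹` is the transfer function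
of the unitary colligation `H` evaluated at the unitary `P`; here `1 - a P` is invertible
because `P ^ κ = 1` and `a ^ κ ≠ 1`. Multiplying `(1 - a P) M` by its adjoint and using the
orthogonality relations of the rows of `H` gives `(1 - a P) M Mᴴ (1 - a P)ᴴ = (1 - a P)(1 - a P)ᴴ`,
so `M Mᴴ = 1`.
-/

/-- First column of the circulant matrix `Circ(H)` induced by `H = !![a,b;c,d]`. -/
noncomputable def circWeight (κ : ℕ) [NeZero κ] (a b c d : ℂ) : ZMod κ → ℂ :=
  fun ℓ => if ℓ = 0 then d + b * c / (1 - a ^ κ) * a ^ (κ - 1)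
           else b * c / (1 - a ^ κ) * a ^ (ℓ.val - 1)

open Matrix

theorem mem_unitaryGroup_fin_two_rows {K : Type*} [CommRing K] [StarRing K] {a b c d : K}
    (hH : !![a, b; c, d] ∈ unitaryGroup (Fin 2) K) :
    a * star a + b * star b = 1 ∧ a * star c + b * star d = 0 ∧
      c * star c + d * star d = 1 := by
  have hHH := mem_unitaryGroup_iff.mp hH
  refine ⟨?_, ?_, ?_⟩
  · simpa [mul_apply, Fin.sum_univ_two] using congrFun₂ hHH 0 0
  · simpa [mul_apply, Fin.sum_univ_two] using congrFun₂ hHH 0 1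
  · simpa [mul_apply, Fin.sum_univ_two] using congrFun₂ hHH 1 1

theorem norm_lt_one_of_mem_unitaryGroup_fin_two {𝕜 : Type*} [RCLike 𝕜] {a b c d : 𝕜}
    (hH : !![a, b; c, d] ∈ unitaryGroup (Fin 2) 𝕜) (hb : b ≠ 0) : ‖a‖ < 1 := by
  have hrow : ‖a‖ ^ 2 + ‖b‖ ^ 2 = 1 := by
    have h := (mem_unitaryGroup_fin_two_rows hH).1
    simp only [RCLike.star_def, RCLike.mul_conj] at h
    exact_mod_cast h
  have hb' : 0 < ‖b‖ := norm_pos_iff.mpr hb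
  nlinarith [norm_nonneg a]

theorem isUnit_one_sub_smul_of_pow_eq_one {K R : Type*} [CommRing K] [Ring R] [Algebra K R]
    {P : R} {n : ℕ} (hP : P ^ n = 1) {a : K} (ha : IsUnit (1 - a ^ n)) :
    IsUnit (1 - a • P) := by
  have hcomm : Commute (1 - a • P) (∑ i ∈ Finset.range n, (a • P) ^ i) :=
    (Commute.one_left _).sub_left (Commute.sum_right _ _ _ fun i _ => Commute.self_pow _ i)
  have hprod :
      (1 - a • P) * ∑ i ∈ Finset.range n, (a • P) ^ i = algebraMap K R (1 - a ^ n) := by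
    rw [mul_neg_geom_sum, smul_pow, hP, map_sub, map_one, Algebra.algebraMap_eq_smul_one]
  exact (hcomm.isUnit_mul_iff.mp (hprod ▸ ha.map _)).1

theorem mul_star_self_eq_one_of_one_sub_smul_mul {K R : Type*} [CommRing K] [StarRing K]
    [Ring R] [StarRing R] [Algebra K R] [StarModule K R] {a b c d : K}
    (hH : !![a, b; c, d] ∈ unitaryGroup (Fin 2) K) {P M : R} (hP : P * star P = 1)
    (hA : IsUnit (1 - a • P)) (hM : (1 - a • P) * M = d • (1 - a • P) + (b * c) • P) :
    M * star M = 1 := by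
  obtain ⟨row₁, row₁₂, row₂⟩ := mem_unitaryGroup_fin_two_rows hH
  have row₁₂' : star a * c + star b * d = 0 := by simpa [mul_comm] using congrArg star row₁₂
  have key : (1 - a • P) * (M * star M * star (1 - a • P))
      = (1 - a • P) * (1 * star (1 - a • P)) := by
    calc (1 - a • P) * (M * star M * star (1 - a • P))
        = ((1 - a • P) * M) * star ((1 - a • P) * M) := by
          rw [star_mul]; simp only [mul_assoc]
      _ = (d • (1 - a • P) + (b * c) • P) * star (d • (1 - a • P) + (b * c) • P) := by rw [hM]
      _ = (1 - a • P) * (1 * star (1 - a • P)) := by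
        simp only [star_add, star_sub, star_smul, star_one, star_mul', mul_add, add_mul, mul_sub,
          sub_mul, smul_mul_assoc, mul_smul_comm, one_mul, mul_one, hP]
        linear_combination (norm := module)
          ((1 + a * star a) * row₂ + c * star c * row₁ - a * star c * row₁₂'
              - star a * c * row₁₂) • (1 : R)
            + (c * row₁₂ - a * row₂) • P + (star c * row₁₂' - star a * row₂) • star P
  exact hA.star.mul_right_cancel (hA.mul_left_cancel key)

theorem permMatrixHom_mul_star {n K : Type*} [Fintype n] [DecidableEq n] [CommRing K]
    [StarRing K] (σ : Equiv.Perm n) :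
    (permMatrixHom σ : Matrix n n K) * star (permMatrixHom σ) = 1 := by
  simp [star_eq_conjTranspose, ← permMatrix_mul]

section Shift

variable {G K : Type*} [AddCommGroup G] [Fintype G] [DecidableEq G] [CommRing K]

theorem permMatrixHom_addRight_eq_circulant (g : G) :
    (permMatrixHom (Equiv.addRight g) : Matrix G G K) = circulant (Pi.single g 1) := by
  ext i j
  simp only [permMatrixHom_apply, PEquiv.toMatrix_apply, Equiv.toPEquiv_apply, Option.mem_def,
    Option.some_inj, Equiv.neg_addRight, Equiv.coe_addRight, circulant_apply, Pi.single_apply]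
  congr 1
  grind

theorem permMatrixHom_addRight_mul_circulant (g : G) (v : G → K) :
    (permMatrixHom (Equiv.addRight g) : Matrix G G K) * circulant v
      = circulant fun i => v (i - g) := by
  ext i j
  simp [PEquiv.toMatrix_toPEquiv_mul, circulant_apply, sub_eq_add_neg, add_right_comm]

theorem permMatrixHom_addRight_pow_eq_one {g : G} {n : ℕ} (h : n • g = 0) :
    (permMatrixHom (Equiv.addRight g) : Matrix G G K) ^ n = 1 := by
  rw [← map_pow]
  simp [h]

theorem one_sub_smul_permMatrixHom_addRight_mul_circulant {g : G} {a d e : K} {w : G → K}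
    (hw : (w - a • fun i => w (i - g))
      = d • (Pi.single 0 1 - a • Pi.single g 1) + e • Pi.single g 1) :
    (1 - a • permMatrixHom (Equiv.addRight g)) * circulant w
      = d • (1 - a • permMatrixHom (Equiv.addRight g))
        + e • permMatrixHom (Equiv.addRight g) := by
  rw [sub_mul, one_mul, smul_mul_assoc, permMatrixHom_addRight_mul_circulant,
    permMatrixHom_addRight_eq_circulant, ← circulant_single_one, ← circulant_smul,
    ← circulant_sub, ← circulant_smul, ← circulant_sub, ← circulant_smul, ← circulant_smul,
    ← circulant_add, hw]

end Shift

theorem ZMod.val_sub_one {κ : ℕ} [NeZero κ] (x : ZMod κ) :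
    (x - 1).val = if x = 0 then κ - 1 else x.val - 1 := by
  have hκ : 1 ≤ κ := NeZero.one_le
  split_ifs with hx
  · rw [hx, ← ZMod.val_natCast_of_lt (Nat.sub_lt hκ one_pos), Nat.cast_sub hκ,
      ZMod.natCast_self]
    simp
  · have hx1 : 1 ≤ x.val := Nat.one_le_iff_ne_zero.mpr ((ZMod.val_ne_zero x).mpr hx)
    rw [← ZMod.val_natCast_of_lt ((Nat.sub_le _ _).trans_lt (ZMod.val_lt x)), Nat.cast_sub hx1,
      ZMod.natCast_zmod_val, Nat.cast_one]

theorem mul_pow_val_sub_one {κ : ℕ} [NeZero κ] {M : Type*} [Monoid M] (a : M) (x : ZMod κ) :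
    a * a ^ (x - 1).val = if x = 0 then a ^ κ else a ^ x.val := by
  rw [ZMod.val_sub_one]
  split_ifs with hx
  · exact mul_pow_sub_one (NeZero.ne κ) a
  · exact mul_pow_sub_one ((ZMod.val_ne_zero x).mpr hx) a

section CircWeight

variable {κ : ℕ} [NeZero κ] {a b c d : ℂ}

theorem circWeight_eq (ℓ : ZMod κ) :
    circWeight κ a b c d ℓ
      = (if ℓ = 0 then d else 0) + b * c / (1 - a ^ κ) * a ^ (ℓ - 1).val := by
  unfold circWeight
  rw [ZMod.val_sub_one]
  split_ifs <;> ring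

theorem circWeight_sub_smul_circWeight_sub_one (hD : 1 - a ^ κ ≠ 0) :
    (circWeight κ a b c d - a • fun ℓ => circWeight κ a b c d (ℓ - 1))
      = d • (Pi.single 0 1 - a • Pi.single 1 1) + (b * c) • Pi.single 1 1 := by
  funext ℓ
  have hshift := mul_pow_val_sub_one a (ℓ - 1)
  simp only [Pi.add_apply, Pi.sub_apply, Pi.smul_apply, smul_eq_mul, circWeight_eq,
    Pi.single_apply, sub_eq_zero, mul_ite, mul_one, mul_zero] at hshift ⊢
  by_cases hℓ : ℓ = 1
  · subst hℓ
    simp only [sub_self, ZMod.val_zero, pow_zero, if_true] at hshift ⊢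
    field_simp
    split_ifs <;> linear_combination -(b * c) * hshift
  · simp only [hℓ, if_false] at hshift ⊢
    split_ifs <;> linear_combination -(b * c / (1 - a ^ κ)) * hshift

end CircWeight

theorem stmt_3 (κ : ℕ) [NeZero κ] (a b c d : ℂ)
    (hU : !![a, b; c, d] ∈ Matrix.unitaryGroup (Fin 2) ℂ)
    (h : a * b * c * d ≠ 0) :
    Matrix.circulant (circWeight κ a b c d) ∈ Matrix.unitaryGroup (ZMod κ) ℂ := by
  have hb : b ≠ 0 := fun hb => h (by simp [hb])
  have hD : 1 - a ^ κ ≠ 0 := by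
    have ha : ‖a ^ κ‖ < 1 := by
      rw [norm_pow]
      exact pow_lt_one₀ (norm_nonneg a) (norm_lt_one_of_mem_unitaryGroup_fin_two hU hb)
        (NeZero.ne κ)
    exact sub_ne_zero.mpr fun h1 => by simp [← h1] at ha
  have hP : (permMatrixHom (Equiv.addRight 1) : Matrix (ZMod κ) (ZMod κ) ℂ) ^ κ = 1 :=
    permMatrixHom_addRight_pow_eq_one (by simp)
  rw [mem_unitaryGroup_iff]
  exact mul_star_self_eq_one_of_one_sub_smul_mul hU (permMatrixHom_mul_star _)
    (isUnit_one_sub_smul_of_pow_eq_one hP hD.isUnit)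
    (one_sub_smul_permMatrixHom_addRight_mul_circulant
      (circWeight_sub_smul_circWeight_sub_one hD))
end

section
/- Let U be unitary on a finite-dimensional complex inner product space, P an orthogonal projection, and E = PUP restricted to ran(P). If ker(1 − U) restricted to ran(P) is trivial in the sense that U has no eigenvector of eigenvalue 1 supported in ran(P) (i.e. no v ≠ 0 with Pv = v and Uv = v), then I − E is invertible on ran(P). -/
/-!
A fixed point `v = E v` in `ran P` satisfies `P (U v) = v`. Since `P` is an orthogonal projection
and `‖U v‖ = ‖v‖`, this forces `U v = v`, so `v = 0` by hypothesis. Thus `I - E` is injective on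
`ran P`, which it maps into itself, and in finite dimension it is then also surjective there.
-/

open ContinuousLinearMap

open RCLike in
theorem LinearMap.IsSymmetric.eq_of_apply_eq_of_norm_eq {𝕜 V : Type*} [RCLike 𝕜]
    [NormedAddCommGroup V] [InnerProductSpace 𝕜 V] {P : V →ₗ[𝕜] V} (hP : P.IsSymmetric)
    {u v : V} (hPv : P v = v) (hPu : P u = v) (hnorm : ‖u‖ = ‖v‖) : u = v := by
  have hinner : (inner 𝕜 u v : 𝕜) = inner 𝕜 v v := by
    rw [← hPv, ← hP u v, hPu, hPv]
  have hre : re (inner 𝕜 u v : 𝕜) = ‖v‖ ^ 2 := by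
    rw [hinner, inner_self_eq_norm_sq]
  rw [← sub_eq_zero, ← norm_eq_zero, ← sq_eq_zero_iff (M₀ := ℝ), norm_sub_sq (𝕜 := 𝕜), hre, hnorm]
  ring

theorem LinearMap.existsUnique_mem_apply_eq_of_injOn {K V : Type*} [Field K] [AddCommGroup V]
    [Module K V] {p : Submodule K V} [FiniteDimensional K p] {f : V →ₗ[K] V}
    (hmaps : ∀ x ∈ p, f x ∈ p) (hinj : Set.InjOn f p) {w : V} (hw : w ∈ p) :
    ∃! v, v ∈ p ∧ f v = w := by
  obtain ⟨v, hv, rfl⟩ := (LinearMap.injOn_iff_surjOn hmaps).mp hinj hw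
  exact ⟨v, ⟨hv, rfl⟩, fun y hy => hinj hy.1 hv hy.2⟩

theorem stmt_7
    {V : Type*} [NormedAddCommGroup V] [InnerProductSpace ℂ V]
    [FiniteDimensional ℂ V]
    (U : V →L[ℂ] V) (hU : adjoint U * U = 1 ∧ U * adjoint U = 1)
    (P : V →L[ℂ] V) (hPidem : P.comp P = P) (hPadj : adjoint P = P)
    (E : V →L[ℂ] V) (hE : E = P.comp (U.comp P))
    (hker : ∀ v : V, v ≠ 0 → ¬(P v = v ∧ U v = v)) :
    ∀ w : V, P w = w → ∃! v : V, P v = v ∧ v - E v = w := by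
  set S := LinearMap.range (P : V →ₗ[ℂ] V)
  set T := ((1 - E : V →L[ℂ] V) : V →ₗ[ℂ] V)
  have hmem : ∀ x, x ∈ S ↔ P x = x :=
    fun _ => LinearMap.IsIdempotentElem.mem_range_iff (IsIdempotentElem.toLinearMap hPidem)
  have hE_of_mem : ∀ x, P x = x → E x = P (U x) := fun x hx => by simp [hE, hx]
  have hmaps : ∀ x ∈ S, T x ∈ S := by
    intro x hx
    rw [hmem] at hx ⊢
    have hPP : P (P (U x)) = P (U x) := congr($hPidem (U x))
    simp [T, hx, hE_of_mem x hx, hPP]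
  have hinj : Set.InjOn T S := by
    refine LinearMap.injOn_of_disjoint_ker le_rfl (Submodule.disjoint_def.mpr fun x hx hx0 => ?_)
    rw [hmem] at hx
    have hPUx : P (U x) = x := by
      rw [LinearMap.mem_ker] at hx0
      exact (sub_eq_zero.mp (by simpa [T, hE_of_mem x hx] using hx0)).symm
    have hUx : U x = x :=
      (isSelfAdjoint_iff_isSymmetric.mp hPadj).eq_of_apply_eq_of_norm_eq hx hPUx
        (norm_map_of_mem_unitary hU x)
    by_contra hne
    exact hker x hne ⟨hx, hUx⟩
  intro w hw
  simpa [hmem, T] using LinearMap.existsUnique_mem_apply_eq_of_injOn hmaps hinj ((hmem w).mpr hw)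
end
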